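/- arXiv:math/0603630 — 9 statements merged into one kernel-verified Lean document; each statement's English description precedes it below -/
import Mathlib

section
/- For all real numbers M, N with 2 ≤ N, M ≤ 15, N - 1 ≤ M ≤ N, the polynomial P(M,N) = -90851035780 - 16374894040M² + 33929984593N² - 272432160√3(10 - 8M + 10M² - 8N - 8MN + 3N²)π + 28828800(689 - 148M + 199M² - 148N - 148MN - 74N²)π² satisfies P(M,N) ≤ 0. -/
set_option maxHeartbeats 1000000

open Real

theorem sec3_inequality (M N : ℝ) (hN2 : 2 ≤ N) (hM15 : M ≤ 15)
    (hNM : N - 1 ≤ M) (hMN : M ≤ N) :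
    -90851035780 - 16374894040*M^2 + 33929984593*N^2
      - 272432160*Real.sqrt 3*(10 - 8*M + 10*M^2 - 8*N - 8*M*N + 3*N^2)*π
      + 28828800*(689 - 148*M + 199*M^2 - 148*N - 148*M*N - 74*N^2)*π^2 ≤ 0 := by
  have hN16 : N ≤ 16 := by linarith
  have hM1 : 1 ≤ M := by linarith
  have hs1 : (1.732050 : ℝ) ≤ Real.sqrt 3 := by
    rw [show (1.732050:ℝ) = Real.sqrt (1.732050^2) by rw [Real.sqrt_sq]; norm_num]
    exact Real.sqrt_le_sqrt (by norm_num)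
  have hs2 : Real.sqrt 3 ≤ 1.732051 := by
    rw [show (1.732051:ℝ) = Real.sqrt (1.732051^2) by rw [Real.sqrt_sq]; norm_num]
    exact Real.sqrt_le_sqrt (by norm_num)
  have hp1 : (3.141592 : ℝ) ≤ π := le_of_lt Real.pi_gt_d6
  have hp2 : π ≤ 3.141593 := le_of_lt Real.pi_lt_d6
  have hppos : (0:ℝ) < π := Real.pi_pos
  have hx1 : (5.441 : ℝ) ≤ Real.sqrt 3 * π := by nlinarith
  have hx2 : Real.sqrt 3 * π ≤ 5.442 := by nlinarith
  have hy1 : (9.869 : ℝ) ≤ π^2 := by nlinarith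
  have hy2 : π^2 ≤ 9.870 := by nlinarith
  set Q : ℝ := 10 - 8*M + 10*M^2 - 8*N - 8*M*N + 3*N^2 with hQdef
  set R : ℝ := 689 - 148*M + 199*M^2 - 148*N - 148*M*N - 74*N^2 with hRdef
  have hQlb : (-12 : ℝ) ≤ Q := by
    rw [hQdef]
    rcases le_or_gt N (7/3) with h | h
    · nlinarith [sq_nonneg (5*M - 2 - 2*N), mul_nonneg (sub_nonneg.2 hN2) (by linarith : (0:ℝ) ≤ 7/3 - N)]
    · nlinarith [sq_nonneg (5*N - 14), mul_nonneg (by linarith : (0:ℝ) ≤ M - N + 1) (by linarith : (0:ℝ) ≤ 3*N - 7), sq_nonneg (M - N + 1)]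
  have hRlb : (-13600 : ℝ) ≤ R := by
    rw [hRdef]
    nlinarith [mul_nonneg (sub_nonneg.2 hN2) (sub_nonneg.2 hN16), mul_nonneg (sub_nonneg.2 hM1) (sub_nonneg.2 hM15), sq_nonneg (N - M), mul_nonneg (sub_nonneg.2 hNM) (sub_nonneg.2 hMN), sq_nonneg (N-16), sq_nonneg (M-15)]
  have prod1 : 0 ≤ (Real.sqrt 3 * π - 5.441) * (Q + 12) :=
    mul_nonneg (by linarith) (by linarith)
  have prod2 : 0 ≤ (9.870 - π^2) * (R + 13600) :=
    mul_nonneg (by linarith) (by linarith)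
  have key : -90851035780 - 16374894040*M^2 + 33929984593*N^2
      - 272432160*(5441/1000)*Q + 28828800*(987/100)*R
      + 272432160*12*(1/1000) + 28828800*13600*(1/1000) ≤ 0 := by
    rw [hQdef, hRdef]
    nlinarith [mul_nonneg (sub_nonneg.2 hN2) (sub_nonneg.2 hN16), mul_nonneg (sub_nonneg.2 hM1) (sub_nonneg.2 hM15), sq_nonneg (N - M), mul_nonneg (sub_nonneg.2 hNM) (sub_nonneg.2 hMN), sq_nonneg (N-16), sq_nonneg (M-15), mul_nonneg (sub_nonneg.2 hNM) (sub_nonneg.2 hN16), mul_nonneg (sub_nonneg.2 hMN) (sub_nonneg.2 hN2)]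
  nlinarith [key, prod1, prod2, hx2, hy1]
end

section
/- The polynomial P(M,N) = -90851035780 - 16374894040M² + 33929984593N² - 272432160√3(10 - 8M + 10M² - 8N - 8MN + 3N²)π + 28828800(689 - 148M + 199M² - 148N - 148MN - 74N²)π² has exactly one critical point in ℝ², and at that critical point N < 0 (in particular the critical point lies outside the region 2 ≤ N ≤ M+1, M ≤ 15). -/
/-!
`P` is a quadratic polynomial `a M² + b M N + c N² + d M + e N + f`, so its gradient is linear
and, when the discriminant `4ac - b²` is nonzero, Cramer's rule gives exactly one critical point,
with `N = (bd - 2ae) / (4ac - b²)`. Here `d = e = b`, so `N = b (b - 2a) / (4ac - b²)`, and the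
bounds `√3 π ≈ 5.4414`, `π² ≈ 9.8696` give `b < 0`, `b - 2a < 0` and `4ac - b² < 0`.
-/

open Real

theorem deriv_quadratic (a b c x : ℝ) :
    deriv (fun x : ℝ => a * x ^ 2 + b * x + c) x = 2 * a * x + b := by
  have h : HasDerivAt (fun x : ℝ => a * x ^ 2 + b * x + c) (a * (2 * x) + b) x := by
    simpa using (((hasDerivAt_pow 2 x).const_mul a).add ((hasDerivAt_id x).const_mul b)).add_const c
  rw [h.deriv]; ring

def IsCriticalPoint (P : ℝ → ℝ → ℝ) (p : ℝ × ℝ) : Prop :=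
  deriv (fun M => P M p.2) p.1 = 0 ∧ deriv (fun N => P p.1 N) p.2 = 0

section QuadraticInTwoVariables

variable (a b c d e f : ℝ)

theorem isCriticalPoint_quadratic_iff (p : ℝ × ℝ) :
    IsCriticalPoint (fun M N => a * M ^ 2 + b * M * N + c * N ^ 2 + d * M + e * N + f) p ↔
      2 * a * p.1 + b * p.2 + d = 0 ∧ b * p.1 + 2 * c * p.2 + e = 0 := by
  obtain ⟨M, N⟩ := p
  have hM : (fun x => a * x ^ 2 + b * x * N + c * N ^ 2 + d * x + e * N + f) =
      fun x => a * x ^ 2 + (b * N + d) * x + (c * N ^ 2 + e * N + f) := by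
    funext x; ring
  have hN : (fun y => a * M ^ 2 + b * M * y + c * y ^ 2 + d * M + e * y + f) =
      fun y => c * y ^ 2 + (b * M + e) * y + (a * M ^ 2 + d * M + f) := by
    funext y; ring
  simp only [IsCriticalPoint, hM, hN, deriv_quadratic]
  constructor <;> rintro ⟨h₁, h₂⟩ <;> constructor <;> linarith

theorem isCriticalPoint_quadratic_iff_eq (hΔ : 4 * a * c - b ^ 2 ≠ 0) (p : ℝ × ℝ) :
    IsCriticalPoint (fun M N => a * M ^ 2 + b * M * N + c * N ^ 2 + d * M + e * N + f) p ↔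
      p = ((b * e - 2 * c * d) / (4 * a * c - b ^ 2), (b * d - 2 * a * e) / (4 * a * c - b ^ 2)) := by
  rw [isCriticalPoint_quadratic_iff]
  obtain ⟨M, N⟩ := p
  simp only [Prod.mk.injEq]
  rw [eq_div_iff hΔ, eq_div_iff hΔ]
  constructor
  · rintro ⟨h₁, h₂⟩
    constructor
    · linear_combination 2 * c * h₁ - b * h₂
    · linear_combination 2 * a * h₂ - b * h₁
  · rintro ⟨h₁, h₂⟩
    constructor
    · refine mul_left_cancel₀ hΔ ?_
      linear_combination 2 * a * h₁ + b * h₂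
    · refine mul_left_cancel₀ hΔ ?_
      linear_combination b * h₁ + 2 * c * h₂

end QuadraticInTwoVariables

theorem sqrt_three_mul_pi_mem_Ioo : √3 * π ∈ Set.Ioo 5.4412 5.4416 := by
  have h₁ : (1.732 : ℝ) < √3 := by rw [Real.lt_sqrt] <;> norm_num
  have h₂ : √3 < 1.7321 := by rw [Real.sqrt_lt'] <;> norm_num
  have := pi_gt_d6
  have := pi_lt_d6
  constructor <;> nlinarith

theorem pi_sq_mem_Ioo : π ^ 2 ∈ Set.Ioo 9.8696 9.86961 := by
  have := pi_gt_d6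
  have := pi_lt_d6
  constructor <;> nlinarith

theorem sec3_critical_point :
    let P : ℝ → ℝ → ℝ := fun M N =>
      -90851035780 - 16374894040*M^2 + 33929984593*N^2
        - 272432160*Real.sqrt 3*(10 - 8*M + 10*M^2 - 8*N - 8*M*N + 3*N^2)*π
        + 28828800*(689 - 148*M + 199*M^2 - 148*N - 148*M*N - 74*N^2)*π^2
    let crit : ℝ × ℝ → Prop := fun p =>
      deriv (fun M => P M p.2) p.1 = 0 ∧ deriv (fun N => P p.1 N) p.2 = 0
    (∃! p : ℝ × ℝ, crit p) ∧ (∀ p : ℝ × ℝ, crit p → p.2 < 0) := by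
  intro P crit
  obtain ⟨hx₁, hx₂⟩ := sqrt_three_mul_pi_mem_Ioo
  obtain ⟨hy₁, hy₂⟩ := pi_sq_mem_Ioo
  generalize hx : √3 * π = x at hx₁ hx₂
  generalize hy : π ^ 2 = y at hy₁ hy₂
  set a := -16374894040 - 2724321600 * x + 5736931200 * y with ha
  set b := 2179457280 * x - 4266662400 * y with hb
  set c := 33929984593 - 817296480 * x - 2133331200 * y with hc
  have hP : P = fun M N => a * M ^ 2 + b * M * N + c * N ^ 2 + b * M + b * N
      + (-90851035780 - 2724321600 * x + 19863043200 * y) := by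
    funext M N; simp only [P, a, b, c, ← hx, ← hy]; ring
  have hΔ : 4 * a * c - b ^ 2 < 0 := by rw [ha, hb, hc]; nlinarith
  have hcrit : ∀ p, crit p ↔ p = ((b * b - 2 * c * b) / (4 * a * c - b ^ 2),
      (b * b - 2 * a * b) / (4 * a * c - b ^ 2)) := by
    intro p
    simp only [crit]
    rw [hP]
    exact isCriticalPoint_quadratic_iff_eq a b c b b _ hΔ.ne p
  refine ⟨⟨_, (hcrit _).2 rfl, fun p hp => (hcrit p).1 hp⟩, fun p hp => ?_⟩
  rw [(hcrit p).1 hp]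
  have hb_neg : b < 0 := by rw [hb]; linarith
  have hb_sub : b - 2 * a < 0 := by rw [ha, hb]; linarith
  refine div_neg_of_pos_of_neg ?_ hΔ
  linarith [mul_pos_of_neg_of_neg hb_neg hb_sub]
end

section
/- For all real U, V with 0 ≤ V, 3V ≤ U ≤ 1 - V, the polynomial P(U,V) = U²(3293385188722144 - 451048860827136√3 - 952832984463360π - 874782993324240√3π + 463182700780800π² - 4817666363010084U + 916192998555120√3U + 710514087323040√3πU - 330844786272000π²U - 1072431834636645U² + 346350633108480√3πU² - 33084478627200π²U²) + 9V²(44112638169600π² + 355514206276944√3U + 105870331607040πU + 177818984344461U² + 36504201333600√3πU² + 25732372265600π²U²) satisfies P(U,V) ≤ 0. -/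
open Real

lemma sqrt3_bounds : 1.732 < Real.sqrt 3 ∧ Real.sqrt 3 < 1.7321 := by
  have h : Real.sqrt 3 ^ 2 = 3 := Real.sq_sqrt (by norm_num)
  have h0 : 0 ≤ Real.sqrt 3 := Real.sqrt_nonneg 3
  constructor <;> nlinarith [h, h0]

lemma quad_neg (U : ℝ) (h0 : 0 ≤ U) (h1 : U ≤ 1) :
    (3293385188722144 - 451048860827136*Real.sqrt 3 - 952832984463360*π
        - 874782993324240*Real.sqrt 3*π + 463182700780800*π^2
        - 4817666363010084*U + 916192998555120*Real.sqrt 3*U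
        + 710514087323040*Real.sqrt 3*π*U - 330844786272000*π^2*U
        - 1072431834636645*U^2 + 346350633108480*Real.sqrt 3*π*U^2
        - 33084478627200*π^2*U^2)
    + (44112638169600*π^2 + 355514206276944*Real.sqrt 3*U
        + 105870331607040*π*U + 177818984344461*U^2
        + 36504201333600*Real.sqrt 3*π*U^2 + 25732372265600*π^2*U^2) ≤ 0 := by
  obtain ⟨hs1, hs2⟩ := sqrt3_bounds
  have hp1 : π > 3.1415 := by linarith [Real.pi_gt_d6]
  have hp2 : π < 3.1416 := by linarith [Real.pi_lt_d2, Real.pi_lt_d6]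
  have hsp1 : Real.sqrt 3 * π > 1.732*3.1415 := by nlinarith
  have hsp2 : Real.sqrt 3 * π < 1.7321*3.1416 := by nlinarith
  have hpp1 : π^2 > 3.1415^2 := by nlinarith
  have hpp2 : π^2 < 3.1416^2 := by nlinarith
  nlinarith [mul_nonneg h0 (sub_nonneg.mpr h1), sq_nonneg U,
    mul_nonneg (mul_nonneg h0 h0) (sub_nonneg.mpr h1),
    mul_nonneg (mul_nonneg h0 (sub_nonneg.mpr h1)) (sub_nonneg.mpr h1)]

theorem sec4_inequality (U V : ℝ) (hV : 0 ≤ V) (hUV : 3*V ≤ U) (hU : U ≤ 1 - V) :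
    U^2*(3293385188722144 - 451048860827136*Real.sqrt 3 - 952832984463360*π
        - 874782993324240*Real.sqrt 3*π + 463182700780800*π^2
        - 4817666363010084*U + 916192998555120*Real.sqrt 3*U
        + 710514087323040*Real.sqrt 3*π*U - 330844786272000*π^2*U
        - 1072431834636645*U^2 + 346350633108480*Real.sqrt 3*π*U^2
        - 33084478627200*π^2*U^2)
      + 9*V^2*(44112638169600*π^2 + 355514206276944*Real.sqrt 3*U
        + 105870331607040*π*U + 177818984344461*U^2
        + 36504201333600*Real.sqrt 3*π*U^2 + 25732372265600*π^2*U^2) ≤ 0 := by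
  have h0 : 0 ≤ U := le_trans (by linarith) hUV
  have h1 : U ≤ 1 := by linarith
  have hB : 0 ≤ 44112638169600*π^2 + 355514206276944*Real.sqrt 3*U
        + 105870331607040*π*U + 177818984344461*U^2
        + 36504201333600*Real.sqrt 3*π*U^2 + 25732372265600*π^2*U^2 := by
    have := Real.pi_pos
    have := Real.sqrt_nonneg 3
    positivity
  have hV2 : 9*V^2 ≤ U^2 := by nlinarith
  have key := quad_neg U h0 h1
  nlinarith [mul_le_mul_of_nonneg_right hV2 hB, mul_nonpos_of_nonneg_of_nonpos (sq_nonneg U) key]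
end

section
/- The univariate polynomial Q(U) = P(U, 0), where P(U,V) = U²(3293385188722144 - 451048860827136√3 - 952832984463360π - 874782993324240√3π + 463182700780800π² - 4817666363010084U + 916192998555120√3U + 710514087323040√3πU - 330844786272000π²U - 1072431834636645U² + 346350633108480√3πU² - 33084478627200π²U²) + 9V²(...), has a double root at U = 0 and has no root in the open interval (0, 1); moreover Q(1) < 0. -/
/-! Write `Q U = U ^ 2 * R U` with `R U = c₀ + c₁ U + c₂ U ²`. The factor `U ²` gives the double
root at `0`. Interval bounds on `√3` and `π` show `c₀ < 0`, `c₀ + c₁ + c₂ < 0` and `c₂ > 0`, so `R`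
is a convex function that is negative at both ends of `[0, 1]`, hence negative on all of it. -/

open Real

theorem deriv_sq_mul_at_zero {𝕜 : Type*} [NontriviallyNormedField 𝕜] {f : 𝕜 → 𝕜}
    (hf : DifferentiableAt 𝕜 f 0) : deriv (fun x => x ^ 2 * f x) 0 = 0 := by
  simpa using ((hasDerivAt_pow 2 (0 : 𝕜)).fun_mul hf.hasDerivAt).deriv

theorem quadratic_neg_of_neg_at_zero_of_neg_at_one {a b c x : ℝ} (hc : 0 ≤ c) (h₀ : a < 0)
    (h₁ : a + b + c < 0) (hx₀ : 0 ≤ x) (hx₁ : x ≤ 1) : a + b * x + c * x ^ 2 < 0 := by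
  have hcx_le : c * x ^ 2 ≤ c * x := by
    nlinarith [mul_nonneg hc (mul_nonneg hx₀ (sub_nonneg.2 hx₁))]
  have hlin : a + (b + c) * x < 0 := by
    rcases le_or_gt (b + c) 0 with hbc | hbc
    · nlinarith [mul_nonpos_of_nonpos_of_nonneg hbc hx₀]
    · nlinarith [mul_le_mul_of_nonneg_left hx₁ hbc.le]
  linarith

theorem sqrt_three_gt : (1.73 : ℝ) < √3 := (lt_sqrt (by norm_num)).2 (by norm_num)

theorem sqrt_three_lt : √3 < 1.74 := (sqrt_lt' (by norm_num)).2 (by norm_num)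

noncomputable section

namespace DiagonalRestriction

def c₀ : ℝ := 3293385188722144 - 451048860827136 * √3 - 952832984463360 * π
  - 874782993324240 * √3 * π + 463182700780800 * π ^ 2

def c₁ : ℝ := -4817666363010084 + 916192998555120 * √3 + 710514087323040 * √3 * π
  - 330844786272000 * π ^ 2

def c₂ : ℝ := -1072431834636645 + 346350633108480 * √3 * π - 33084478627200 * π ^ 2

theorem c₀_neg : c₀ < 0 := by
  unfold c₀
  nlinarith [sqrt_three_gt, sqrt_three_lt, pi_gt_d2, pi_lt_d2,
    mul_pos (sub_pos.2 sqrt_three_gt) (sub_pos.2 pi_gt_d2),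
    mul_pos (sub_pos.2 pi_lt_d2) (sub_pos.2 pi_gt_d2)]

theorem c₂_pos : 0 < c₂ := by
  unfold c₂
  nlinarith [sqrt_three_gt, sqrt_three_lt, pi_gt_d2, pi_lt_d2,
    mul_pos (sub_pos.2 sqrt_three_gt) (sub_pos.2 pi_gt_d2),
    mul_pos (sub_pos.2 pi_lt_d2) (sub_pos.2 pi_gt_d2)]

theorem c₀_add_c₁_add_c₂_neg : c₀ + c₁ + c₂ < 0 := by
  unfold c₀ c₁ c₂
  nlinarith [sqrt_three_gt, sqrt_three_lt, pi_gt_d2, pi_lt_d2,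
    mul_pos (sub_pos.2 sqrt_three_lt) (sub_pos.2 pi_lt_d2),
    mul_pos (sub_pos.2 pi_lt_d2) (sub_pos.2 pi_gt_d2)]

theorem cofactor_neg {U : ℝ} (hU : U ∈ Set.Icc 0 1) : c₀ + c₁ * U + c₂ * U ^ 2 < 0 :=
  quadratic_neg_of_neg_at_zero_of_neg_at_one c₂_pos.le c₀_neg c₀_add_c₁_add_c₂_neg hU.1 hU.2

end DiagonalRestriction

end

open DiagonalRestriction in
theorem sec4_diagonal_restriction :
    let Q : ℝ → ℝ := fun U =>
      U^2*(3293385188722144 - 451048860827136*Real.sqrt 3 - 952832984463360*π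
        - 874782993324240*Real.sqrt 3*π + 463182700780800*π^2
        - 4817666363010084*U + 916192998555120*Real.sqrt 3*U
        + 710514087323040*Real.sqrt 3*π*U - 330844786272000*π^2*U
        - 1072431834636645*U^2 + 346350633108480*Real.sqrt 3*π*U^2
        - 33084478627200*π^2*U^2)
    Q 0 = 0 ∧ deriv Q 0 = 0 ∧ (∀ U ∈ Set.Ioo (0:ℝ) 1, Q U ≠ 0) ∧ Q 1 < 0 := by
  intro Q
  have hQ : Q = fun U => U ^ 2 * (c₀ + c₁ * U + c₂ * U ^ 2) := by
    funext U
    simp only [Q, c₀, c₁, c₂]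
    ring
  rw [hQ]
  refine ⟨by simp, deriv_sq_mul_at_zero (by fun_prop), fun U hU => ?_, ?_⟩
  · exact (mul_neg_of_pos_of_neg (pow_pos hU.1 2) (cofactor_neg (Set.Ioo_subset_Icc_self hU))).ne
  · simpa using cofactor_neg (Set.right_mem_Icc.2 zero_le_one)
end

section
/- For all real U, V with V ≤ U ≤ 3V and U + V ≤ 1 (so (U,V) lies in the closed triangle with vertices (0,0), (3/4,1/4), (1/2,1/2)), the polynomial P(U,V) = 32133332U²(-1898955433 - 549628092√6 + 103783680√2π - 22702680√3π + 345945600π² - 1063944882U + 222614730√6U + 259459200√2πU - 136216080√3πU + 115315200π²U - 531972441U² + 113513400√3πU² + 172972800π²U²) - 64266664(824442138√6 - 155675520√2π - 2201993543U + 158918760√3πU + 403603200π²U)(U + U²)V + 3759599844(1478400π² + 10405746√6U + 5765760√2πU - 4546773U² + 4074840√3πU² + 3449600π²U²)V² satisfies P(U,V) ≤ 0. -/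
open Real

set_option maxHeartbeats 2000000

theorem sec5_inequality (U V : ℝ) (hVU : V ≤ U) (hU3V : U ≤ 3*V) (hUV1 : U + V ≤ 1) :
    32133332*U^2*(-1898955433 - 549628092*Real.sqrt 6 + 103783680*Real.sqrt 2*π
        - 22702680*Real.sqrt 3*π + 345945600*π^2 - 1063944882*U
        + 222614730*Real.sqrt 6*U + 259459200*Real.sqrt 2*π*U
        - 136216080*Real.sqrt 3*π*U + 115315200*π^2*U - 531972441*U^2
        + 113513400*Real.sqrt 3*π*U^2 + 172972800*π^2*U^2)
      - 64266664*(824442138*Real.sqrt 6 - 155675520*Real.sqrt 2*π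
        - 2201993543*U + 158918760*Real.sqrt 3*π*U + 403603200*π^2*U)*(U + U^2)*V
      + 3759599844*(1478400*π^2 + 10405746*Real.sqrt 6*U + 5765760*Real.sqrt 2*π*U
        - 4546773*U^2 + 4074840*Real.sqrt 3*π*U^2 + 3449600*π^2*U^2)*V^2 ≤ 0 := by
  have hV0 : (0:ℝ) ≤ V := by linarith
  have hU0 : (0:ℝ) ≤ U := le_trans hV0 hVU
  -- bounds on the irrational constants
  have s2nn := Real.sqrt_nonneg 2
  have s3nn := Real.sqrt_nonneg 3
  have s6nn := Real.sqrt_nonneg 6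
  have s2sq : Real.sqrt 2 ^ 2 = 2 := Real.sq_sqrt (by norm_num)
  have s3sq : Real.sqrt 3 ^ 2 = 3 := Real.sq_sqrt (by norm_num)
  have s6sq : Real.sqrt 6 ^ 2 = 6 := Real.sq_sqrt (by norm_num)
  have h2l : (1414213/1000000:ℝ) ≤ Real.sqrt 2 := by nlinarith
  have h2u : Real.sqrt 2 ≤ (1414214/1000000:ℝ) := by nlinarith
  have h3l : (1732050/1000000:ℝ) ≤ Real.sqrt 3 := by nlinarith
  have h3u : Real.sqrt 3 ≤ (1732051/1000000:ℝ) := by nlinarith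
  have h6l : (2449489/1000000:ℝ) ≤ Real.sqrt 6 := by nlinarith
  have h6u : Real.sqrt 6 ≤ (2449490/1000000:ℝ) := by nlinarith
  have hpl : (3141592/1000000:ℝ) ≤ π := by
    have := Real.pi_gt_d6; linarith
  have hpu : π ≤ (3141593/1000000:ℝ) := by
    have := Real.pi_lt_d6; linarith
  have hp0 : (0:ℝ) ≤ π := by linarith
  have h2pl : (1414213/1000000:ℝ)*(3141592/1000000) ≤ Real.sqrt 2 * π :=
    mul_le_mul h2l hpl (by norm_num) s2nn
  have h2pu : Real.sqrt 2 * π ≤ (1414214/1000000:ℝ)*(3141593/1000000) :=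
    mul_le_mul h2u hpu hp0 (by norm_num)
  have h3pl : (1732050/1000000:ℝ)*(3141592/1000000) ≤ Real.sqrt 3 * π :=
    mul_le_mul h3l hpl (by norm_num) s3nn
  have h3pu : Real.sqrt 3 * π ≤ (1732051/1000000:ℝ)*(3141593/1000000) :=
    mul_le_mul h3u hpu hp0 (by norm_num)
  have hp2l : (3141592/1000000:ℝ)^2 ≤ π^2 := by nlinarith
  have hp2u : π^2 ≤ (3141593/1000000:ℝ)^2 := by nlinarith
  -- upper bounds on the monomial coefficients
  have dU2 : (-61019765381792756:ℝ) - 17661381956762544*Real.sqrt 6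
      + 3334915445621760*(Real.sqrt 2*π) - 729512753729760*(Real.sqrt 3*π)
      + 11116384818739200*π^2 - 16282*10^12 ≤ 0 := by linarith
  have dU3 : (-34188094123006824:ℝ) + 7153353027180360*Real.sqrt 6
      + 8337288614054400*(Real.sqrt 2*π) - 4377076522378560*(Real.sqrt 3*π)
      + 3705461606246400*π^2 - 33131*10^12 ≤ 0 := by linarith
  have dU4 : (-17094047061503412:ℝ) + 3647563768648800*(Real.sqrt 3*π)
      + 5558192409369600*π^2 - 57612*10^12 ≤ 0 := by linarith
  have dUV : (-52984145870287632:ℝ)*Real.sqrt 6 + 10004746336865280*(Real.sqrt 2*π)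
      + 85333*10^12 ≤ 0 := by linarith
  have dU2V : (141514779158150552:ℝ) - 52984145870287632*Real.sqrt 6
      + 10004746336865280*(Real.sqrt 2*π) - 10213178552216640*(Real.sqrt 3*π)
      - 25938231243724800*π^2 + 255392*10^12 ≤ 0 := by linarith
  have dU3V : (141514779158150552:ℝ) - 10213178552216640*(Real.sqrt 3*π)
      - 25938231243724800*π^2 + 170058*10^12 ≤ 0 := by linarith
  have dV2 : (5558192409369600:ℝ)*π^2 - 54859*10^12 ≤ 0 := by linarith
  have dUV2 : (39121441038303624:ℝ)*Real.sqrt 6 + 21676950396541440*(Real.sqrt 2*π)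
      - 192137*10^12 ≤ 0 := by linarith
  have dU2V2 : (-17094047061503412:ℝ) + 15319767828324960*(Real.sqrt 3*π)
      + 12969115621862400*π^2 - 194268*10^12 ≤ 0 := by linarith
  -- monomial nonnegativity
  have mU2 : (0:ℝ) ≤ U^2 := sq_nonneg U
  have mU3 : (0:ℝ) ≤ U^3 := pow_nonneg hU0 3
  have mU4 : (0:ℝ) ≤ U^4 := pow_nonneg hU0 4
  have mUV : (0:ℝ) ≤ U*V := mul_nonneg hU0 hV0
  have mU2V : (0:ℝ) ≤ U^2*V := mul_nonneg mU2 hV0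
  have mU3V : (0:ℝ) ≤ U^3*V := mul_nonneg mU3 hV0
  have mV2 : (0:ℝ) ≤ V^2 := sq_nonneg V
  have mUV2 : (0:ℝ) ≤ U*V^2 := mul_nonneg hU0 mV2
  have mU2V2 : (0:ℝ) ≤ U^2*V^2 := mul_nonneg mU2 mV2
  -- the rational majorant is nonpositive on the region
  have hQ : 16282*U^2 + 33131*U^3 + 57612*U^4 - 85333*(U*V) - 255392*(U^2*V)
      - 170058*(U^3*V) + 54859*V^2 + 192137*(U*V^2) + 194268*(U^2*V^2) ≤ 0 := by
    have g1 : (0:ℝ) ≤ U - V := by linarith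
    have g2 : (0:ℝ) ≤ 3*V - U := by linarith
    rcases eq_or_lt_of_le hU0 with h | h
    · have hVz : V = 0 := le_antisymm (by linarith) hV0
      rw [← h, hVz]; norm_num
    · rcases le_or_gt U (1/2) with hc | hc
      · have g3 : (0:ℝ) ≤ 1 - 2*U := by linarith
        have key : 0 ≤ (2*U/3) * (-(16282*U^2 + 33131*U^3 + 57612*U^4 - 85333*(U*V)
            - 255392*(U^2*V) - 170058*(U^3*V) + 54859*V^2 + 192137*(U*V^2)
            + 194268*(U^2*V^2))) := by
          linarith [mul_nonneg (mul_nonneg g2 g1) hU0,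
            mul_nonneg (mul_nonneg (mul_nonneg g2 g1) hU0) hU0,
            mul_nonneg (mul_nonneg (mul_nonneg (mul_nonneg g2 g1) hU0) hU0) hU0,
            mul_nonneg (mul_nonneg g1 hU0) hU0,
            mul_nonneg (mul_nonneg (mul_nonneg g1 hU0) hU0) hU0,
            mul_nonneg (mul_nonneg (mul_nonneg (mul_nonneg g1 hU0) hU0) hU0) g3,
            mul_nonneg (mul_nonneg g2 hU0) hU0,
            mul_nonneg (mul_nonneg (mul_nonneg g2 hU0) hU0) g3,
            mul_nonneg (mul_nonneg (mul_nonneg (mul_nonneg g2 hU0) hU0) hU0) g3]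
        by_contra hpos
        push_neg at hpos
        have hprod := mul_pos h hpos
        linarith [key, hprod]
      · have h34 : U ≤ 3/4 := by linarith
        have g4 : (0:ℝ) ≤ 1 - U - V := by linarith
        have hb1 : (0:ℝ) ≤ 2*U - 1 := by linarith
        rcases lt_or_eq_of_le h34 with h34' | h34'
        · have hb2 : (0:ℝ) < 3 - 4*U := by linarith
          have hb2' : (0:ℝ) ≤ 3 - 4*U := le_of_lt hb2
          have key : 0 ≤ ((3 - 4*U)/3) * (-(16282*U^2 + 33131*U^3 + 57612*U^4
              - 85333*(U*V) - 255392*(U^2*V) - 170058*(U^3*V) + 54859*V^2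
              + 192137*(U*V^2) + 194268*(U^2*V^2))) := by
            linarith [mul_nonneg (mul_nonneg hb2' g2) g4,
              mul_nonneg (mul_nonneg (mul_nonneg hb2' g2) g4) hU0,
              mul_nonneg (mul_nonneg (mul_nonneg (mul_nonneg hb2' g2) g4) hU0) hU0,
              mul_nonneg (mul_nonneg g4 hU0) hU0,
              mul_nonneg (mul_nonneg (mul_nonneg g4 hU0) hU0) hb1,
              mul_nonneg (mul_nonneg (mul_nonneg (mul_nonneg g4 hU0) hU0) hb1) hb2',
              mul_nonneg g2 (mul_nonneg (mul_nonneg hb2' hb2') (mul_nonneg hb2' hb2')),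
              mul_nonneg g2 (mul_nonneg hb1 (mul_nonneg hb2' (mul_nonneg hb2' hb2'))),
              mul_nonneg g2 (mul_nonneg (mul_nonneg hb1 hb1) (mul_nonneg hb2' hb2')),
              mul_nonneg g2 (mul_nonneg (mul_nonneg hb1 hb1) (mul_nonneg hb1 hb2')),
              mul_nonneg g2 (mul_nonneg (mul_nonneg hb1 hb1) (mul_nonneg hb1 hb1))]
          by_contra hpos
          push_neg at hpos
          have hprod := mul_pos hb2 hpos
          linarith [key, hprod]
        · have hVq : V = 1/4 := le_antisymm (by linarith) (by linarith)
          rw [h34', hVq]; norm_num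
  -- combine: each true coefficient is at most its rational majorant
  linarith [mul_nonpos_iff.mpr (Or.inr ⟨dU2, mU2⟩),
    mul_nonpos_iff.mpr (Or.inr ⟨dU3, mU3⟩),
    mul_nonpos_iff.mpr (Or.inr ⟨dU4, mU4⟩),
    mul_nonpos_iff.mpr (Or.inr ⟨dUV, mUV⟩),
    mul_nonpos_iff.mpr (Or.inr ⟨dU2V, mU2V⟩),
    mul_nonpos_iff.mpr (Or.inr ⟨dU3V, mU3V⟩),
    mul_nonpos_iff.mpr (Or.inr ⟨dV2, mV2⟩),
    mul_nonpos_iff.mpr (Or.inr ⟨dUV2, mUV2⟩),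
    mul_nonpos_iff.mpr (Or.inr ⟨dU2V2, mU2V2⟩),
    hQ]
end

section
/- The function G(M) = (1 + 2(2·arcsin(1/(2M))/π)^{2/3} + 2(2·arcsin(1/(2M))/π)^{4/3})² · 9M²/(16(M² - 1/4)) is decreasing for M ≥ 15, and G(15) ≤ 1. Consequently G(M) ≤ 1 for all M ≥ 15. -/
/-!
Write `x(M) = 2 arcsin(1/(2M))/π`. Then `G(M) = F(x(M))² · B(M)` with
`F(x) = 1 + 2x^{2/3} + 2x^{4/3}` increasing in `x ≥ 0` and `B(M) = 9M²/(16(M² - 1/4))`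
decreasing in `M > 1/2`. Since `x` is decreasing in `M`, `G` is a product of two nonnegative
decreasing functions. At `M = 15`, `sin(1/15) ≥ 1/15 - (1/15)³/6 ≥ 1/30` gives
`x(15) ≤ 2/45`, hence `x(15)^{2/3} ≤ 63/500` (as `(2/45)² ≤ (63/500)³`), and then
`G(15) ≤ (1 + 2·0.126 + 2·0.126²)² · 2025/3596 < 1`.
-/

open Real Set

lemma AntitoneOn.mul_of_nonneg {α M₀ : Type*} [Preorder α] [Mul M₀] [Zero M₀] [Preorder M₀]
    [PosMulMono M₀] [MulPosMono M₀] {f g : α → M₀} {s : Set α}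
    (hf : AntitoneOn f s) (hg : AntitoneOn g s)
    (hf₀ : ∀ x ∈ s, 0 ≤ f x) (hg₀ : ∀ x ∈ s, 0 ≤ g x) :
    AntitoneOn (fun x => f x * g x) s :=
  fun _ ha _ hb h ↦ mul_le_mul (hf ha hb h) (hg ha hb h) (hg₀ _ hb) (hf₀ _ ha)

lemma rpow_four_thirds_eq_sq {x : ℝ} (hx : 0 ≤ x) :
    x ^ ((4:ℝ)/3) = (x ^ ((2:ℝ)/3)) ^ 2 := by
  rw [← rpow_mul_natCast hx]
  norm_num

lemma rpow_two_thirds_le_of_sq_le_cube {x c : ℝ} (hx : 0 ≤ x) (hc : 0 ≤ c) (h : x ^ 2 ≤ c ^ 3) :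
    x ^ ((2:ℝ)/3) ≤ c := by
  calc x ^ ((2:ℝ)/3) = (x ^ 2) ^ ((1:ℝ)/3) := by
        rw [← rpow_natCast_mul hx]; norm_num
    _ ≤ (c ^ 3) ^ ((1:ℝ)/3) := by gcongr
    _ = c := by rw [← rpow_natCast_mul hc]; norm_num

lemma monotoneOn_one_add_two_rpow_add_two_rpow :
    MonotoneOn (fun x : ℝ => 1 + 2 * x ^ ((2:ℝ)/3) + 2 * x ^ ((4:ℝ)/3)) (Ici 0) := by
  intro a ha b _ hab
  have ha : 0 ≤ a := ha
  dsimp only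
  gcongr

lemma antitoneOn_two_mul_arcsin_one_div_two_mul_div_pi :
    AntitoneOn (fun M : ℝ => 2 * arcsin (1 / (2 * M)) / π) (Ioi 0) := by
  intro a ha b _ hab
  have ha : 0 < a := ha
  dsimp only
  gcongr

lemma two_mul_arcsin_one_div_two_mul_div_pi_nonneg {M : ℝ} (hM : 0 ≤ M) :
    0 ≤ 2 * arcsin (1 / (2 * M)) / π := by
  have : 0 ≤ arcsin (1 / (2 * M)) := arcsin_nonneg.2 (by positivity)
  positivity

lemma antitoneOn_sq_div_sq_sub :
    AntitoneOn (fun M : ℝ => 9 * M ^ 2 / (16 * (M ^ 2 - 1/4))) (Ioi (1/2)) := by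
  intro a ha b hb hab
  have ha : 1/2 < a := ha
  have hb : 1/2 < b := hb
  dsimp only
  rw [div_le_div_iff₀ (by nlinarith) (by nlinarith)]
  nlinarith

lemma one_add_two_rpow_add_two_rpow_le {x c : ℝ} (hx : 0 ≤ x) (hc : 0 ≤ c)
    (h : x ^ 2 ≤ c ^ 3) :
    1 + 2 * x ^ ((2:ℝ)/3) + 2 * x ^ ((4:ℝ)/3) ≤ 1 + 2 * c + 2 * c ^ 2 := by
  have ht := rpow_two_thirds_le_of_sq_le_cube hx hc h
  have ht₀ := rpow_nonneg hx ((2:ℝ)/3)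
  rw [rpow_four_thirds_eq_sq hx]
  gcongr

lemma antitoneOn_tall_triangle :
    AntitoneOn (fun M : ℝ => (1 + 2 * (2 * arcsin (1 / (2 * M)) / π) ^ ((2:ℝ)/3)
      + 2 * (2 * arcsin (1 / (2 * M)) / π) ^ ((4:ℝ)/3)) ^ 2 * (9 * M ^ 2 / (16 * (M ^ 2 - 1/4))))
      (Ioi (1/2)) := by
  set x : ℝ → ℝ := fun M => 2 * arcsin (1 / (2 * M)) / π
  set F : ℝ → ℝ := fun x => 1 + 2 * x ^ ((2:ℝ)/3) + 2 * x ^ ((4:ℝ)/3)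
  have hx_nonneg : ∀ M ∈ Ioi (0 : ℝ), 0 ≤ x M := fun M hM => two_mul_arcsin_one_div_two_mul_div_pi_nonneg hM.le
  have hF_nonneg : ∀ M ∈ Ioi (1/2 : ℝ), 0 ≤ F (x M) := fun M hM => by
    have hx := hx_nonneg M (mem_Ioi.2 (one_half_pos.trans hM))
    positivity
  have hFx : AntitoneOn (fun M => F (x M)) (Ioi (1/2)) :=
    (monotoneOn_one_add_two_rpow_add_two_rpow.comp_AntitoneOn antitoneOn_two_mul_arcsin_one_div_two_mul_div_pi
      hx_nonneg).mono (Ioi_subset_Ioi one_half_pos.le)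
  have := (hFx.mul_of_nonneg hFx hF_nonneg hF_nonneg).mul_of_nonneg antitoneOn_sq_div_sq_sub
    (fun M hM => mul_nonneg (hF_nonneg M hM) (hF_nonneg M hM))
    (fun M (hM : 1/2 < M) => div_nonneg (by positivity) (by nlinarith))
  simpa only [← sq] using this

lemma arcsin_one_div_thirty_le : arcsin (1/30) ≤ 1/15 := by
  rw [arcsin_le_iff_le_sin (by norm_num) ⟨by linarith [pi_pos], by linarith [pi_gt_three]⟩]
  linarith [sin_ge_sub_cube (x := 1/15) (by norm_num)]

lemma two_mul_arcsin_one_div_thirty_div_pi_le : 2 * arcsin (1/30) / π ≤ 2/45 := by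
  have h₀ : 0 ≤ arcsin (1/30) := arcsin_nonneg.2 (by norm_num)
  rw [div_le_iff₀ pi_pos]
  nlinarith [arcsin_one_div_thirty_le, pi_gt_three]

theorem tall_triangle_bound :
    let G : ℝ → ℝ := fun M =>
      (1 + 2*(2*Real.arcsin (1/(2*M))/π)^((2:ℝ)/3)
         + 2*(2*Real.arcsin (1/(2*M))/π)^((4:ℝ)/3))^2 * (9*M^2/(16*(M^2 - 1/4)))
    AntitoneOn G (Set.Ici 15) ∧ G 15 ≤ 1 ∧ ∀ M : ℝ, 15 ≤ M → G M ≤ 1 := by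
  intro G
  have hG : AntitoneOn G (Ici 15) :=
    antitoneOn_tall_triangle.mono (Ici_subset_Ioi.2 (by norm_num))
  have hG15 : G 15 ≤ 1 := by
    set x := 2 * arcsin (1/30) / π
    have hx₀ : 0 ≤ x := by
      have := arcsin_nonneg.2 (by norm_num : (0:ℝ) ≤ 1/30)
      positivity
    have hF := one_add_two_rpow_add_two_rpow_le hx₀ (c := 63/500) (by norm_num)
      (by nlinarith [two_mul_arcsin_one_div_thirty_div_pi_le])
    calc G 15 = (1 + 2 * x ^ ((2:ℝ)/3) + 2 * x ^ ((4:ℝ)/3)) ^ 2 * (2025/3596) := by norm_num [G, x]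
      _ ≤ (1 + 2 * (63/500) + 2 * (63/500) ^ 2) ^ 2 * (2025/3596) := by gcongr
      _ ≤ 1 := by norm_num
  exact ⟨hG, hG15, fun M hM => (hG self_mem_Ici hM hM).trans hG15⟩
end

section
/- The function f(x,y) = sin(4πy/√3) - sin(2π(x + y/√3)) + sin(2π(x - y/√3)) vanishes on the boundary of the equilateral triangle with vertices (0,0), (1,0), (1/2, √3/2); that is, f(x,0) = 0 for all x, f(x, √3 x) = 0 for all x, and f(x, √3(1-x)) = 0 for all x. -/
open Real

theorem equilateral_eigenfunction_boundary :
    let f : ℝ → ℝ → ℝ := fun x y =>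
      Real.sin (4*π*y/Real.sqrt 3) - Real.sin (2*π*(x + y/Real.sqrt 3))
        + Real.sin (2*π*(x - y/Real.sqrt 3))
    (∀ x : ℝ, f x 0 = 0) ∧ (∀ x : ℝ, f x (Real.sqrt 3 * x) = 0) ∧
      (∀ x : ℝ, f x (Real.sqrt 3 * (1 - x)) = 0) := by
  intro f
  have h3 : Real.sqrt 3 ≠ 0 := by positivity
  refine ⟨fun x => by simp [f], fun x => ?_, fun x => ?_⟩
  · have h : Real.sqrt 3 * x / Real.sqrt 3 = x := by field_simp
    have e : 4*π*(Real.sqrt 3 * x)/Real.sqrt 3 = 2*π*(x+x) := by field_simp; ring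
    simp only [f, h, e]
    simp
  · have h : Real.sqrt 3 * (1 - x) / Real.sqrt 3 = 1 - x := by field_simp
    have e1 : 4*π*(Real.sqrt 3 * (1-x))/Real.sqrt 3 = 4*π*(1-x) := by field_simp
    simp only [f, h, e1]
    have e2 : (4:ℝ)*π*(1-x) = -(4*π*x) + (2:ℤ)*(2*π) := by push_cast; ring
    have e3 : (2:ℝ)*π*(x + (1-x)) = 0 + (1:ℤ)*(2*π) := by push_cast; ring
    have e4 : (2:ℝ)*π*(x - (1-x)) = 4*π*x + (-1:ℤ)*(2*π) := by push_cast; ring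
    rw [e2, e3, e4, Real.sin_add_int_mul_two_pi, Real.sin_add_int_mul_two_pi,
      Real.sin_add_int_mul_two_pi]
    simp
end

section
/- The function g(x,y) = sin(√3 π y) sin(πx/3) + sin(√3 π y/3) sin(5πx/3) + sin(2√3 π y/3) sin(4πx/3) vanishes on the boundary of the triangle with vertices (0,0), (1,0), (0,√3): g(x,0) = 0 for all x, g(0,y) = 0 for all y, and g(x, √3(1-x)) = 0 for all x. -/
open Real

theorem right_triangle_eigenfunction_boundary :
    let g : ℝ → ℝ → ℝ := fun x y =>
      Real.sin (Real.sqrt 3 * π * y) * Real.sin (π*x/3)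
        + Real.sin (Real.sqrt 3 * π * y/3) * Real.sin (5*π*x/3)
        + Real.sin (2*Real.sqrt 3 * π * y/3) * Real.sin (4*π*x/3)
    (∀ x : ℝ, g x 0 = 0) ∧ (∀ y : ℝ, g 0 y = 0) ∧
      (∀ x : ℝ, g x (Real.sqrt 3 * (1 - x)) = 0) := by
  intro g
  have prod : ∀ a b : ℝ, Real.sin a * Real.sin b
      = (Real.cos (a-b) - Real.cos (a+b))/2 := by
    intro a b
    have h := Real.cos_sub_cos (a-b) (a+b)
    rw [show ((a-b)+(a+b))/2 = a by ring, show ((a-b)-(a+b))/2 = -b by ring,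
      Real.sin_neg] at h
    linarith
  have key : ∀ v : ℝ, Real.sin (9*v) * Real.sin v + Real.sin (3*v) * Real.sin (5*v)
      + (- Real.sin (6*v)) * Real.sin (4*v) = 0 := by
    intro v
    rw [neg_mul, prod, prod, prod]
    rw [show (9*v - v) = 8*v by ring, show (6*v - 4*v) = 2*v by ring,
      show (3*v + 5*v) = 8*v by ring, show (3*v - 5*v) = -(2*v) by ring,
      Real.cos_neg]
    ring
  have h3 : Real.sqrt 3 * Real.sqrt 3 = 3 := Real.mul_self_sqrt (by norm_num)
  refine ⟨fun x => by simp [g], fun y => by simp [g], fun x => ?_⟩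
  show Real.sin (Real.sqrt 3 * π * (Real.sqrt 3 * (1-x))) * Real.sin (π*x/3)
        + Real.sin (Real.sqrt 3 * π * (Real.sqrt 3 * (1-x))/3) * Real.sin (5*π*x/3)
        + Real.sin (2*Real.sqrt 3 * π * (Real.sqrt 3 * (1-x))/3) * Real.sin (4*π*x/3) = 0
  set v := π*x/3 with hv
  have a1 : Real.sqrt 3 * π * (Real.sqrt 3 * (1-x)) = (π - 9*v) + 2*π := by
    rw [hv]; linear_combination (π*(1-x)) * h3
  have a2 : Real.sqrt 3 * π * (Real.sqrt 3 * (1-x))/3 = π - 3*v := by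
    rw [hv]; linear_combination (π*(1-x)/3) * h3
  have a3 : 2*Real.sqrt 3 * π * (Real.sqrt 3 * (1-x))/3 = 2*π - 6*v := by
    rw [hv]; linear_combination (2*π*(1-x)/3) * h3
  rw [a2, a3, a1, Real.sin_add_two_pi, Real.sin_pi_sub, Real.sin_pi_sub,
    Real.sin_two_pi_sub]
  rw [show 5*π*x/3 = 5*v by rw [hv]; ring, show 4*π*x/3 = 4*v by rw [hv]; ring]
  exact key v
end

section
/- The quartic polynomial R(V) = P(1 - V, V), where P is the polynomial from the case 1 ≤ N ≤ 2, (N+1)/2 ≤ M ≤ 2 (Section 4), has exactly two real roots, both lying outside the closed interval [0, 1/4]; and P(1,0) < 0 and P(3/4, 1/4) < 0. Consequently P(1-V, V) < 0 for all V ∈ [0, 1/4]. -/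
open Real
set_option maxHeartbeats 1000000

private lemma sec4_aux (c0 c1 c2 c3 c4 : ℝ) (F : ℝ → ℝ)
    (hF : ∀ V, F V = c0 + c1*V + c2*V^2 + c3*V^3 + c4*V^4)
    (h0l : -2814102500000000 < c0) (h0u : c0 < -2814100470000000)
    (h1l : 7286751640000000 < c1) (h1u : c1 < 7286758720000000)
    (h2l : 12481948660000000 < c2) (h2u : c2 < 12481957550000000)
    (h3l : -19195701910000000 < c3) (h3u : c3 < -19195694760000000)
    (h4l : 6159458370000000 < c4) (h4u : c4 < 6159461070000000) :
    (∃ r₁ r₂ : ℝ, r₁ ≠ r₂ ∧ F r₁ = 0 ∧ F r₂ = 0 ∧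
        r₁ ∉ Set.Icc (0:ℝ) (1/4) ∧ r₂ ∉ Set.Icc (0:ℝ) (1/4) ∧
        ∀ r : ℝ, F r = 0 → r = r₁ ∨ r = r₂) ∧
      F 0 < 0 ∧ F (1/4) < 0 ∧ ∀ V ∈ Set.Icc (0:ℝ) (1/4), F V < 0 := by
  -- F < 0 on [0, 7/25]
  have hA : ∀ V : ℝ, 0 ≤ V → V ≤ 7/25 → F V < 0 := by
    intro V hv0 hv1
    rw [hF]
    have e1 : c1*V ≤ 7286758720000000*V :=
      mul_le_mul_of_nonneg_right h1u.le hv0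
    have e2 : c2*V^2 ≤ 12481957550000000*V^2 :=
      mul_le_mul_of_nonneg_right h2u.le (sq_nonneg V)
    have e3 : c3*V^3 ≤ -19195694760000000*V^3 :=
      mul_le_mul_of_nonneg_right h3u.le (by positivity)
    have e4 : c4*V^4 ≤ 6159461070000000*V^4 :=
      mul_le_mul_of_nonneg_right h4u.le (by positivity)
    have key : -2814100470000000 + 7286758720000000*V + 12481957550000000*V^2
        - 19195694760000000*V^3 + 6159461070000000*V^4 < 0 := by
      nlinarith [mul_nonneg hv0 (by linarith : (0:ℝ) ≤ 7/25 - V), sq_nonneg (V - 1/5), sq_nonneg V,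
        mul_nonneg (mul_nonneg hv0 (by linarith : (0:ℝ) ≤ 7/25 - V)) (sq_nonneg (V - 1/5)),
        sq_nonneg (V^2 - V/13 - 1/20), sq_nonneg (V - 2/7), mul_nonneg hv0 hv0]
    linarith
  -- F < 0 on [-3/10, 0]
  have hB : ∀ V : ℝ, -(3/10) ≤ V → V ≤ 0 → F V < 0 := by
    intro V hv0 hv1
    rw [hF]
    have hv3 : V^3 ≤ 0 := Odd.pow_nonpos (by decide) hv1
    have e1 : c1*V ≤ 7286751640000000*V := by
      have := mul_nonpos_of_nonneg_of_nonpos (by linarith : (0:ℝ) ≤ c1 - 7286751640000000) hv1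
      nlinarith
    have e3 : c3*V^3 ≤ -19195701910000000*V^3 := by
      have := mul_nonpos_of_nonneg_of_nonpos
        (by linarith : (0:ℝ) ≤ c3 - (-19195701910000000)) hv3
      nlinarith
    have e2 : c2*V^2 ≤ 12481957550000000*V^2 :=
      mul_le_mul_of_nonneg_right h2u.le (sq_nonneg V)
    have e4 : c4*V^4 ≤ 6159461070000000*V^4 :=
      mul_le_mul_of_nonneg_right h4u.le (by positivity)
    have key : -2814100470000000 + 7286751640000000*V + 12481957550000000*V^2
        - 19195701910000000*V^3 + 6159461070000000*V^4 < 0 := by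
      nlinarith [mul_nonneg (by linarith : (0:ℝ) ≤ V + 3/10) (by linarith : (0:ℝ) ≤ -V),
        mul_nonneg (mul_nonneg (by linarith : (0:ℝ) ≤ V + 3/10) (by linarith : (0:ℝ) ≤ -V))
          (sq_nonneg (V - 1/5)),
        sq_nonneg (V^2 - V/13 - 1/20), sq_nonneg (V + 1/5), sq_nonneg V, sq_nonneg (V + 3/10)]
    linarith
  -- F > 0 on [8/25, ∞)
  have hC : ∀ V : ℝ, 8/25 ≤ V → 0 < F V := by
    intro V hv0
    have hv : (0:ℝ) ≤ V := by linarith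
    rw [hF]
    have e1 : -2814102500000000 ≤ c0 := h0l.le
    have e2 : 7286751640000000*V ≤ c1*V := mul_le_mul_of_nonneg_right h1l.le hv
    have e3 : 12481948660000000*V^2 ≤ c2*V^2 :=
      mul_le_mul_of_nonneg_right h2l.le (sq_nonneg V)
    have e4 : -19195701910000000*V^3 ≤ c3*V^3 :=
      mul_le_mul_of_nonneg_right h3l.le (by positivity)
    have e5 : 6159458370000000*V^4 ≤ c4*V^4 :=
      mul_le_mul_of_nonneg_right h4l.le (by positivity)
    have key : (0:ℝ) < -2814102500000000 + 7286751640000000*V + 12481948660000000*V^2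
        - 19195701910000000*V^3 + 6159458370000000*V^4 := by
      nlinarith [mul_nonneg (by linarith : (0:ℝ) ≤ V - 8/25) (sq_nonneg (V - 7/4)),
        (by linarith : (0:ℝ) ≤ V - 8/25),
        sq_nonneg (V^2 - 17/9*V + 9/20), sq_nonneg (V - 1/100), sq_nonneg V,
        mul_nonneg (by linarith : (0:ℝ) ≤ V - 8/25) (sq_nonneg V)]
    linarith
  -- continuity
  have hFc : Continuous F := by
    have hfe : F = fun V => c0 + c1*V + c2*V^2 + c3*V^3 + c4*V^4 := funext hF
    rw [hfe]; fun_prop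
  -- endpoint values
  have hm06 : 0 < F (-(3/5)) := by rw [hF]; nlinarith
  have hm05 : F (-(1/2)) < 0 := by rw [hF]; nlinarith
  have h028 : F (7/25) < 0 := hA _ (by norm_num) le_rfl
  have h032 : 0 < F (8/25) := hC _ le_rfl
  -- root r₁ in [-3/5, -1/2]
  obtain ⟨r₁, hr₁mem, hr₁⟩ : ∃ r ∈ Set.Icc (-(3/5):ℝ) (-(1/2)), F r = 0 := by
    have h := intermediate_value_Icc' (by norm_num : (-(3/5):ℝ) ≤ -(1/2)) hFc.continuousOn
    have : (0:ℝ) ∈ Set.Icc (F (-(1/2))) (F (-(3/5))) := ⟨hm05.le, hm06.le⟩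
    obtain ⟨r, hrmem, hr⟩ := h this
    exact ⟨r, hrmem, hr⟩
  -- root r₂ in [7/25, 8/25]
  obtain ⟨r₂, hr₂mem, hr₂⟩ : ∃ r ∈ Set.Icc ((7:ℝ)/25) (8/25), F r = 0 := by
    have h := intermediate_value_Icc (by norm_num : (7:ℝ)/25 ≤ 8/25) hFc.continuousOn
    have : (0:ℝ) ∈ Set.Icc (F (7/25)) (F (8/25)) := ⟨h028.le, h032.le⟩
    obtain ⟨r, hrmem, hr⟩ := h this
    exact ⟨r, hrmem, hr⟩
  obtain ⟨hr₁l, hr₁u⟩ := hr₁mem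
  obtain ⟨hr₂l, hr₂u⟩ := hr₂mem
  refine ⟨⟨r₁, r₂, by intro h; rw [h] at hr₁u; linarith, hr₁, hr₂,
      fun h => by have := h.1; linarith,
      fun h => by have := h.2; linarith, ?_⟩,
    by have := hF 0; rw [this]; nlinarith,
    hA _ (by norm_num) (by norm_num),
    fun V hV => hA V hV.1 (by have := hV.2; linarith)⟩
  -- uniqueness
  intro r hr
  rcases le_or_gt r (-(3/10)) with h | h
  · -- strictly decreasing region: r = r₁
    left
    have hr₁3 : r₁ ≤ -(3/10) := by linarith
    set Q : ℝ := c1 + c2*(r+r₁) + c3*(r^2+r*r₁+r₁^2) + c4*((r+r₁)*(r^2+r₁^2)) with hQdef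
    have t1 : (c2 - 12481948660000000)*(r + r₁) ≤ 0 :=
      mul_nonpos_of_nonneg_of_nonpos (by linarith) (by linarith)
    have t2 : c3*(r^2+r*r₁+r₁^2) ≤ 0 :=
      mul_nonpos_of_nonpos_of_nonneg (by linarith)
        (by nlinarith [sq_nonneg (r+r₁), sq_nonneg (r-r₁)])
    have t3 : c4*((r+r₁)*(r^2+r₁^2)) ≤ 0 := by
      have h1 : (r+r₁)*(r^2+r₁^2) ≤ 0 :=
        mul_nonpos_of_nonpos_of_nonneg (by linarith) (by positivity)
      exact mul_nonpos_of_nonneg_of_nonpos (by linarith) h1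
    have hQ : Q < 0 := by
      have : 12481948660000000*(r+r₁) ≤ 12481948660000000*(-(3/5)) := by nlinarith
      nlinarith [t1, t2, t3]
    have hfac : (r - r₁) * Q = 0 := by
      have : F r - F r₁ = (r - r₁) * Q := by rw [hF, hF, hQdef]; ring
      rw [hr, hr₁] at this; linarith
    rcases mul_eq_zero.mp hfac with h' | h'
    · linarith [sub_eq_zero.mp h']
    · exact absurd h' (ne_of_lt hQ)
  · rcases le_or_gt r (7/25) with h2 | h2
    · exfalso
      rcases le_or_gt r 0 with h3 | h3
      · have := hB r h.le h3; linarith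
      · have := hA r h3.le h2; linarith
    · rcases le_or_gt r (8/25) with h3 | h3
      · -- strictly increasing region: r = r₂
        right
        set Q : ℝ := c1 + c2*(r+r₂) + c3*(r^2+r*r₂+r₂^2) + c4*((r+r₂)*(r^2+r₂^2)) with hQdef
        have t1 : 0 ≤ (c2 - 12481948660000000)*(r + r₂) :=
          mul_nonneg (by linarith) (by linarith)
        have hfle : r^2 + r*r₂ + r₂^2 ≤ 192/625 := by nlinarith
        have hfge : 0 ≤ r^2 + r*r₂ + r₂^2 := by nlinarith
        have t2 : (-19195701910000000)*(192/625) ≤ c3*(r^2+r*r₂+r₂^2) := by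
          have step : (-19195701910000000)*(r^2+r*r₂+r₂^2) ≤ c3*(r^2+r*r₂+r₂^2) :=
            mul_le_mul_of_nonneg_right h3l.le hfge
          nlinarith
        have t3 : 0 ≤ c4*((r+r₂)*(r^2+r₂^2)) := by
          have h1 : (0:ℝ) ≤ (r+r₂)*(r^2+r₂^2) :=
            mul_nonneg (by linarith) (by positivity)
          exact mul_nonneg (by linarith) h1
        have hQ : 0 < Q := by
          have : 12481948660000000*(14/25) ≤ 12481948660000000*(r+r₂) := by nlinarith
          nlinarith [t1, t2, t3]
        have hfac : (r - r₂) * Q = 0 := by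
          have : F r - F r₂ = (r - r₂) * Q := by rw [hF, hF, hQdef]; ring
          rw [hr, hr₂] at this; linarith
        rcases mul_eq_zero.mp hfac with h' | h'
        · linarith [sub_eq_zero.mp h']
        · exact absurd h' (ne_of_gt hQ)
      · exfalso
        have := hC r h3.le; linarith

theorem sec4_boundary_N2 :
    let P : ℝ → ℝ → ℝ := fun U V =>
      U^2*(3293385188722144 - 451048860827136*Real.sqrt 3 - 952832984463360*π
        - 874782993324240*Real.sqrt 3*π + 463182700780800*π^2
        - 4817666363010084*U + 916192998555120*Real.sqrt 3*U
        + 710514087323040*Real.sqrt 3*π*U - 330844786272000*π^2*U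
        - 1072431834636645*U^2 + 346350633108480*Real.sqrt 3*π*U^2
        - 33084478627200*π^2*U^2)
      + 9*V^2*(44112638169600*π^2 + 355514206276944*Real.sqrt 3*U
        + 105870331607040*π*U + 177818984344461*U^2
        + 36504201333600*Real.sqrt 3*π*U^2 + 25732372265600*π^2*U^2)
    let R : ℝ → ℝ := fun V => P (1 - V) V
    (∃ r₁ r₂ : ℝ, r₁ ≠ r₂ ∧ R r₁ = 0 ∧ R r₂ = 0 ∧
        r₁ ∉ Set.Icc (0:ℝ) (1/4) ∧ r₂ ∉ Set.Icc (0:ℝ) (1/4) ∧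
        ∀ r : ℝ, R r = 0 → r = r₁ ∨ r = r₂) ∧
      P 1 0 < 0 ∧ P (3/4) (1/4) < 0 ∧
      ∀ V ∈ Set.Icc (0:ℝ) (1/4), P (1 - V) V < 0 := by
  intro P R
  have h3 : Real.sqrt 3 ^ 2 = 3 := Real.sq_sqrt (by norm_num)
  have hs0 : (0:ℝ) ≤ Real.sqrt 3 := Real.sqrt_nonneg 3
  have hsl : (1.7320508:ℝ) < Real.sqrt 3 := by nlinarith
  have hsh : Real.sqrt 3 < 1.7320509 := by nlinarith
  have hpl : (3.141592:ℝ) < π := Real.pi_gt_d6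
  have hph : π < 3.141593 := Real.pi_lt_d6
  have hspl : (5.4413969:ℝ) < Real.sqrt 3 * π := by nlinarith
  have hsph : Real.sqrt 3 * π < 5.4413990 := by nlinarith
  have hppl : (9.8696002:ℝ) < π ^ 2 := by nlinarith
  have hpph : π ^ 2 < 9.8696066 := by nlinarith
  have key := sec4_aux
    (-2596713008924585 + 465144137727984*Real.sqrt 3 - 952832984463360*π
      + 182081727107280*(Real.sqrt 3*π) + 99253435881600*π^2)
    (12155956050132544 - 1846481274011088*Real.sqrt 3 + 1905665968926720*π
      - 1767378807754560*(Real.sqrt 3*π) + 198506871763200*π^2)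
    (-15993834049027829 + 5497157991330720*Real.sqrt 3
      + 3663400879298160*(Real.sqrt 3*π) - 99253435881600*π^2)
    (5906651983356366 - 4115820855047616*Real.sqrt 3 - 952832984463360*π
      - 2752992243761760*(Real.sqrt 3*π))
    (527939024463504 + 674888445110880*(Real.sqrt 3*π) + 198506871763200*π^2)
    R
    (by intro V; simp only [R, P]; ring)
    (by nlinarith) (by nlinarith) (by nlinarith) (by nlinarith) (by nlinarith)
    (by nlinarith) (by nlinarith) (by nlinarith) (by nlinarith) (by nlinarith)
  refine ⟨key.1, ?_, ?_, key.2.2.2⟩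
  · have h := key.2.1
    have : R 0 = P 1 0 := by simp only [R]; norm_num
    rwa [this] at h
  · have h := key.2.2.1
    have : R (1/4) = P (3/4) (1/4) := by simp only [R]; norm_num
    rwa [this] at h
end
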